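/- Helstrom achievability: let v₀, v₁ ∈ EuclideanSpace ℝ (Fin 3) with ‖v₀‖ ≤ 1 and ‖v₁‖ ≤ 1, and let p₀, p₁ ≥ 0 with p₀ + p₁ = 1. Then there exists a binary projective measurement (P₀, P₁) on ℂ² with p₀·Re(trace(P₀ * ρ(v₀))) + p₁·Re(trace(P₁ * ρ(v₁))) = (1 + max(|p₁ - p₀|, ‖p₁ • v₁ - p₀ • v₀‖))/2; hence the optimal probability of correct decision equals Pc = max{(1 + ‖d‖)/2, p₀, p₁} where d = p₁ • v₁ - p₀ • v₀. (Equations (Pc2c)–(Pc3)) -/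
import Mathlib


open Matrix

/-- The Pauli matrix σx. -/
def pauliX : Matrix (Fin 2) (Fin 2) ℂ := !![0, 1; 1, 0]

/-- The Pauli matrix σy. -/
def pauliY : Matrix (Fin 2) (Fin 2) ℂ := !![0, -Complex.I; Complex.I, 0]

/-- The Pauli matrix σz. -/
def pauliZ : Matrix (Fin 2) (Fin 2) ℂ := !![1, 0; 0, -1]

/-- The coherence-vector (Bloch) matrix associated to `v ∈ ℝ³`. -/
noncomputable def rho (v : EuclideanSpace ℝ (Fin 3)) : Matrix (Fin 2) (Fin 2) ℂ :=
  (1/2 : ℂ) • (1 + (v 0 : ℂ) • pauliX + (v 1 : ℂ) • pauliY + (v 2 : ℂ) • pauliZ)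

/-- A binary projective measurement on ℂ²: a pair of Hermitian idempotent matrices
summing to the identity (including the trivial pairs `(0,1)` and `(1,0)`). -/
def IsProjMeas (P₀ P₁ : Matrix (Fin 2) (Fin 2) ℂ) : Prop :=
  P₀.IsHermitian ∧ P₁.IsHermitian ∧ P₀ * P₀ = P₀ ∧ P₁ * P₁ = P₁ ∧ P₀ + P₁ = 1

/-- The spin projector with Bloch vector `(a,b,c)`. -/
noncomputable def blochProj (a b c : ℝ) : Matrix (Fin 2) (Fin 2) ℂ :=
  !![((1+c : ℝ) : ℂ)/2, ((a : ℂ) - (b:ℂ)*Complex.I)/2;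
     ((a : ℂ) + (b:ℂ)*Complex.I)/2, ((1-c : ℝ) : ℂ)/2]

lemma rho_eq (v : EuclideanSpace ℝ (Fin 3)) :
    rho v = !![((1 + v 2 : ℝ) : ℂ)/2, ((v 0 : ℂ) - (v 1:ℂ)*Complex.I)/2;
      ((v 0 : ℂ) + (v 1:ℂ)*Complex.I)/2, ((1 - v 2 : ℝ) : ℂ)/2] := by
  ext i j
  fin_cases i <;> fin_cases j <;>
    simp [rho, pauliX, pauliY, pauliZ, Matrix.one_apply] <;> push_cast <;> ring

lemma blochProj_herm (a b c : ℝ) : (blochProj a b c).IsHermitian := by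
  ext i j
  fin_cases i <;> fin_cases j <;>
    simp [blochProj, Matrix.conjTranspose_apply, Complex.ext_iff]

lemma blochProj_idem (a b c : ℝ) (h : a^2 + b^2 + c^2 = 1) :
    blochProj a b c * blochProj a b c = blochProj a b c := by
  have hc : (a:ℂ)^2 + (b:ℂ)^2 + (c:ℂ)^2 = 1 := by exact_mod_cast h
  ext i j
  fin_cases i <;> fin_cases j <;>
    simp [blochProj, Matrix.mul_apply, Fin.sum_univ_two] <;>
    first
      | linear_combination (-(1:ℂ)/4)*hc
      | linear_combination (-(b:ℂ)^2/4) * Complex.I_sq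
      | linear_combination ((1:ℂ)/4)*hc + (-(b:ℂ)^2/4) * Complex.I_sq
      | linear_combination ((1:ℂ)/4)*hc
      | linear_combination ((b:ℂ)^2/4) * Complex.I_sq
      | ring

lemma blochProj_sum (a b c : ℝ) : blochProj (-a) (-b) (-c) + blochProj a b c = 1 := by
  ext i j
  fin_cases i <;> fin_cases j <;>
    simp [blochProj, Matrix.one_apply] <;> ring

lemma trace_blochProj_rho (a b c : ℝ) (v : EuclideanSpace ℝ (Fin 3)) :
    ((blochProj a b c) * rho v).trace.re = (1 + a * v 0 + b * v 1 + c * v 2)/2 := by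
  have h : ((blochProj a b c) * rho v).trace
      = (((1 + a * v 0 + b * v 1 + c * v 2)/2 : ℝ) : ℂ) := by
    rw [rho_eq]
    simp [Matrix.trace_fin_two, Matrix.mul_apply, Fin.sum_univ_two, blochProj]
    push_cast
    linear_combination (-(b:ℂ)*(v 1)/2) * Complex.I_sq
  rw [h, Complex.ofReal_re]

lemma trace_rho (v : EuclideanSpace ℝ (Fin 3)) : (rho v).trace = 1 := by
  rw [rho_eq]
  simp [Matrix.trace_fin_two]
  ring

/-- **Helstrom achievability (Equations (Pc2c)–(Pc3)).** There is a binary projective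
measurement achieving probability of correct decision
`(1 + max(|p₁ - p₀|, ‖p₁ v₁ - p₀ v₀‖))/2`; hence the optimal probability of correct
decision equals `max{(1 + ‖d‖)/2, p₀, p₁}` with `d = p₁ v₁ - p₀ v₀`. -/
theorem helstrom_achievability
    (v₀ v₁ : EuclideanSpace ℝ (Fin 3)) (hv₀ : ‖v₀‖ ≤ 1) (hv₁ : ‖v₁‖ ≤ 1)
    (p₀ p₁ : ℝ) (hp₀ : 0 ≤ p₀) (hp₁ : 0 ≤ p₁) (hp : p₀ + p₁ = 1) :
    ∃ P₀ P₁ : Matrix (Fin 2) (Fin 2) ℂ, IsProjMeas P₀ P₁ ∧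
      p₀ * (P₀ * rho v₀).trace.re + p₁ * (P₁ * rho v₁).trace.re =
        (1 + max |p₁ - p₀| ‖p₁ • v₁ - p₀ • v₀‖) / 2 := by
  rcases le_or_gt ‖p₁ • v₁ - p₀ • v₀‖ |p₁ - p₀| with hm | hm
  · -- trivial measurement
    rw [max_eq_left hm]
    rcases le_total p₀ p₁ with hle | hle
    · refine ⟨0, 1, ⟨Matrix.isHermitian_zero, Matrix.isHermitian_one, by simp, by simp,
        by simp⟩, ?_⟩
      rw [abs_of_nonneg (by linarith)]
      simp [trace_rho]
      linarith
    · refine ⟨1, 0, ⟨Matrix.isHermitian_one, Matrix.isHermitian_zero, by simp, by simp,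
        by simp⟩, ?_⟩
      rw [abs_of_nonpos (by linarith)]
      simp [trace_rho]
      linarith
  · -- Bloch projector measurement
    rw [max_eq_right hm.le]
    have hn : 0 < ‖p₁ • v₁ - p₀ • v₀‖ := lt_of_le_of_lt (abs_nonneg _) hm
    set n : ℝ := ‖p₁ • v₁ - p₀ • v₀‖ with hndef
    have hdapp : ∀ i, (p₁ • v₁ - p₀ • v₀ : EuclideanSpace ℝ (Fin 3)) i
        = p₁ * v₁ i - p₀ * v₀ i := by
      intro i; simp
    have hsum : n^2 = (p₁ * v₁ 0 - p₀ * v₀ 0)^2 + (p₁ * v₁ 1 - p₀ * v₀ 1)^2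
        + (p₁ * v₁ 2 - p₀ * v₀ 2)^2 := by
      rw [hndef, EuclideanSpace.norm_eq, Real.sq_sqrt (by positivity)]
      simp [Fin.sum_univ_three, hdapp, Real.norm_eq_abs, sq_abs]
    set a : ℝ := (p₁ * v₁ 0 - p₀ * v₀ 0)/n with hadef
    set b : ℝ := (p₁ * v₁ 1 - p₀ * v₀ 1)/n with hbdef
    set c : ℝ := (p₁ * v₁ 2 - p₀ * v₀ 2)/n with hcdef
    have habc : a^2 + b^2 + c^2 = 1 := by
      rw [hadef, hbdef, hcdef]
      field_simp
      linarith
    have habc' : (-a)^2 + (-b)^2 + (-c)^2 = 1 := by rw [neg_sq, neg_sq, neg_sq]; exact habc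
    refine ⟨blochProj (-a) (-b) (-c), blochProj a b c,
      ⟨blochProj_herm _ _ _, blochProj_herm _ _ _, blochProj_idem _ _ _ habc',
        blochProj_idem _ _ _ habc, blochProj_sum a b c⟩, ?_⟩
    rw [trace_blochProj_rho, trace_blochProj_rho]
    have key : a * (p₁ * v₁ 0 - p₀ * v₀ 0) + b * (p₁ * v₁ 1 - p₀ * v₀ 1)
        + c * (p₁ * v₁ 2 - p₀ * v₀ 2) = n := by
      rw [hadef, hbdef, hcdef]
      field_simp
      linarith
    linear_combination (1/2) * key + (1/2 : ℝ) * hp
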